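/- arXiv:1212.6390 — 2 statements merged into one kernel-verified Lean document; each statement's English description precedes it below -/
import Mathlib

section
/- Fix an integer d ≥ 2 and k ∈ (−π,π)^d, and let λ ∈ ℂ be any root of the quadratic equation λ² = 2d·D̂(k)·λ − (2d−1) (i.e. λ = d·D̂(k) ± √((d·D̂(k))² − (2d−1))). Then A[k]·(λ·1⃗ − D[k]·1⃗) = λ·(λ·1⃗ − D[k]·1⃗); in particular, for k ≠ 0 the two roots λ_{±1}(k) = d·D̂(k) ± √((d·D̂(k))² − (2d−1)) are eigenvalues of A[k] with eigenvectors λ_{±1}(k)·1⃗ − D[k]·1⃗ ≠ 0. For k = 0, the root λ_1(0) = 2d−1 has eigenvector (2d−2)·1⃗, and the root λ_{−1}(0) = 1 has eigenvector e⃗_1 − e⃗_{−1}, i.e. A[0]·(e⃗_1 − e⃗_{−1}) = e⃗_1 − e⃗_{−1}, where e⃗_ι ∈ ℂ^I is the ι-th coordinate vector. -/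
open scoped BigOperators
open Matrix

noncomputable section

/-- The index set `I = {-d, …, -1, 1, …, d}`. -/
def Idx (d : ℕ) : Finset ℤ := (Finset.Icc (-(d : ℤ)) d).erase 0

lemma mem_Idx {d : ℕ} {ι : ℤ} (h : ι ∈ Idx d) : ι ≠ 0 ∧ -(d : ℤ) ≤ ι ∧ ι ≤ d := by
  simpa [Idx, Finset.mem_erase, Finset.mem_Icc, and_assoc] using h

lemma mem_Idx' {d : ℕ} {ι : ℤ} (h1 : ι ≠ 0) (h2 : -(d : ℤ) ≤ ι) (h3 : ι ≤ d) :
    ι ∈ Idx d := by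
  simp [Idx, Finset.mem_erase, Finset.mem_Icc]; omega

/-- `k_ι = sign(ι) · k_{|ι|}` (with `|ι| ∈ {1,…,d}` re-indexed as `Fin d`). -/
def kc {d : ℕ} (k : Fin d → ℝ) (ι : Idx d) : ℝ :=
  (ι.1.sign : ℝ) * k ⟨ι.1.natAbs - 1, by
    obtain ⟨h1, h2, h3⟩ := mem_Idx ι.2; omega⟩

/-- The negation `-ι` as an element of the index set. -/
def negIdx {d : ℕ} (ι : Idx d) : Idx d :=
  ⟨-ι.1, by obtain ⟨h1, h2, h3⟩ := mem_Idx ι.2; exact mem_Idx' (by omega) (by omega) (by omega)⟩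

/-- The coordinate vector `e⃗_ι ∈ ℂ^I`. -/
def eVec {d : ℕ} (ι : Idx d) : Idx d → ℂ := fun κ => if κ = ι then 1 else 0

/-- The unit step `e_ι = sign(ι)·(basis vector |ι|)` in `ℤ^d`. -/
def stepVec {d : ℕ} (ι : Idx d) : Fin d → ℤ :=
  fun j => if (j : ℕ) = ι.1.natAbs - 1 then ι.1.sign else 0

/-- The all-ones matrix `C`. -/
def matC (d : ℕ) : Matrix (Idx d) (Idx d) ℂ := Matrix.of fun _ _ => 1

/-- The matrix `J` with `J_{ι,κ} = δ_{ι,-κ}`. -/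
def matJ (d : ℕ) : Matrix (Idx d) (Idx d) ℂ :=
  Matrix.of fun ι κ => if ι.1 = -κ.1 then 1 else 0

/-- The diagonal matrix `D[k]` with entries `e^{i k_ι}`. -/
def matD {d : ℕ} (k : Fin d → ℝ) : Matrix (Idx d) (Idx d) ℂ :=
  Matrix.diagonal fun ι => Complex.exp (Complex.I * (kc k ι : ℂ))

/-- The NBW transition matrix `A[k] = (C − J)·D[−k]`. -/
def matA {d : ℕ} (k : Fin d → ℝ) : Matrix (Idx d) (Idx d) ℂ :=
  (matC d - matJ d) * matD (-k)

/-- `ω` is an `n`-step nearest-neighbour non-backtracking walk on `ℤ^d`. -/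
def IsNBW (d n : ℕ) (ω : Fin (n + 1) → (Fin d → ℤ)) : Prop :=
  ω 0 = 0 ∧
  (∀ i : ℕ, ∀ hi : i < n,
    (∑ j, |ω ⟨i + 1, by omega⟩ j - ω ⟨i, by omega⟩ j|) = 1) ∧
  (∀ i : ℕ, ∀ hi : i + 2 ≤ n, ω ⟨i + 2, by omega⟩ ≠ ω ⟨i, by omega⟩)

/-- `b_n(x)`: the number of `n`-step NBWs ending at `x`. -/
def bc (d n : ℕ) (x : Fin d → ℤ) : ℕ :=
  Nat.card {ω : Fin (n + 1) → (Fin d → ℤ) // IsNBW d n ω ∧ ω (Fin.last n) = x}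

/-- `b_n^ι(x)`: the number of `n`-step NBWs ending at `x` whose first step is not `e_ι`. -/
def bcRes (d n : ℕ) (ι : Idx d) (x : Fin d → ℤ) : ℕ :=
  Nat.card {ω : Fin (n + 1) → (Fin d → ℤ) //
    IsNBW d n ω ∧ ω (Fin.last n) = x ∧ ∀ _ : 1 ≤ n, ω ⟨1, by omega⟩ ≠ stepVec ι}

/-- Fourier transform `f̂(k) = Σ_x f(x) e^{i k·x}` of a (finitely supported) `f : ℤ^d → ℕ`. -/
def fhat {d : ℕ} (f : (Fin d → ℤ) → ℕ) (k : Fin d → ℝ) : ℂ :=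
  ∑' x : Fin d → ℤ, (f x : ℂ) * Complex.exp (Complex.I * ∑ j, (k j : ℂ) * (x j : ℂ))

/-- `b̂_n(k)`. -/
def bhat (d n : ℕ) (k : Fin d → ℝ) : ℂ := fhat (bc d n) k

/-- `b⃗_n(k)`, the vector with entries `b̂_n^ι(k)`. -/
def bvec (d n : ℕ) (k : Fin d → ℝ) : Idx d → ℂ := fun ι => fhat (bcRes d n ι) k

/-- `D̂(k) = (1/d) Σ_j cos k_j`. -/
def Dhat {d : ℕ} (k : Fin d → ℝ) : ℝ := (1 / d) * ∑ j, Real.cos (k j)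

/-!
Write `A[k] = (C − J)·D[−k]` and `w = λ·1⃗ − D[k]·1⃗`. The vector `D[−k]·w` has entries
`λ·e^{−i k_ι} − 1`; `C` sums them to `λ·2d·D̂(k) − 2d` and `J` reads them at `−ι`, giving
`λ·e^{i k_ι} − 1`. The quadratic equation for `λ` turns the difference into `λ·(λ − e^{i k_ι})`.
If `w = 0` then `e^{i k_j} = λ = e^{−i k_j}` for every `j`, which forces `k = 0` on `(−π, π)^d`.
At `k = 0` we have `A = C − J`, which fixes every vector that is odd under `ι ↦ −ι`.
-/

open Complex

section

variable {d : ℕ}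

def posIdx (d : ℕ) (j : Fin d) : Idx d :=
  ⟨(j : ℤ) + 1, mem_Idx' (by omega) (by omega) (by have := j.2; omega)⟩

theorem negIdx_involutive : Function.Involutive (negIdx (d := d)) := fun ι =>
  Subtype.ext (neg_neg ι.1)

def finProdBoolEquivIdx (d : ℕ) : Fin d × Bool ≃ Idx d where
  toFun p := if p.2 then posIdx d p.1 else negIdx (posIdx d p.1)
  invFun ι := (⟨ι.1.natAbs - 1, by have := mem_Idx ι.2; omega⟩, decide (0 < ι.1))
  left_inv := by
    rintro ⟨j, b⟩
    cases b <;> refine Prod.ext (Fin.ext ?_) ?_ <;> simp [posIdx, negIdx] <;> omega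
  right_inv := by
    rintro ⟨ι, hι⟩
    have := mem_Idx hι
    by_cases h : 0 < ι
    · simp only [h, decide_true, if_true]
      exact Subtype.ext (by simp [posIdx]; omega)
    · simp only [h, decide_false]
      exact Subtype.ext (by simp [posIdx, negIdx]; omega)

theorem sum_Idx {M : Type*} [AddCommMonoid M] (F : Idx d → M) :
    ∑ ι, F ι = ∑ j, (F (posIdx d j) + F (negIdx (posIdx d j))) := by
  rw [← (finProdBoolEquivIdx d).sum_comp, Fintype.sum_prod_type]
  simp [finProdBoolEquivIdx]

theorem card_Idx : (Idx d).card = 2 * d := by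
  rw [Idx, Finset.card_erase_of_mem (by simp), Int.card_Icc]
  omega

theorem kc_posIdx (k : Fin d → ℝ) (j : Fin d) : kc k (posIdx d j) = k j := by
  simp only [kc, posIdx, Int.sign_eq_one_of_pos (by omega : (0 : ℤ) < j + 1), Int.cast_one,
    one_mul]
  congr 1

theorem kc_negIdx (k : Fin d → ℝ) (ι : Idx d) : kc k (negIdx ι) = -kc k ι := by
  simp [kc, negIdx]

theorem kc_neg (k : Fin d → ℝ) (ι : Idx d) : kc (-k) ι = -kc k ι := by
  simp [kc]

@[simp]
theorem kc_zero (ι : Idx d) : kc (0 : Fin d → ℝ) ι = 0 := by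
  simp [kc]

theorem matC_mulVec (w : Idx d → ℂ) : matC d *ᵥ w = fun _ => ∑ κ, w κ := by
  ext ι
  simp [matC, mulVec, dotProduct]

theorem matJ_mulVec (w : Idx d → ℂ) : matJ d *ᵥ w = fun ι => w (negIdx ι) := by
  ext ι
  rw [mulVec, dotProduct, Fintype.sum_eq_single (negIdx ι)]
  · simp [matJ, negIdx]
  · intro κ hκ
    have : ι.1 ≠ -κ.1 := fun h => hκ (Subtype.ext (by simp [negIdx, h]))
    simp [matJ, this]

theorem matD_mulVec (k : Fin d → ℝ) (w : Idx d → ℂ) :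
    matD k *ᵥ w = fun ι => exp (I * kc k ι) * w ι :=
  funext fun _ => mulVec_diagonal _ _ _

theorem matA_mulVec (k : Fin d → ℝ) (w : Idx d → ℂ) :
    matA k *ᵥ w = fun ι => ∑ κ, (matD (-k) *ᵥ w) κ - (matD (-k) *ᵥ w) (negIdx ι) := by
  rw [matA, ← mulVec_mulVec, sub_mulVec, matC_mulVec, matJ_mulVec]
  rfl

theorem matA_zero : matA (0 : Fin d → ℝ) = matC d - matJ d := by
  simp [matA, matD]

theorem Dhat_neg (k : Fin d → ℝ) : Dhat (-k) = Dhat k := by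
  simp [Dhat]

theorem sum_exp_kc (k : Fin d → ℝ) (hd : d ≠ 0) :
    ∑ ι, exp (I * kc k ι) = 2 * d * Dhat k := by
  have hpair : ∀ j, exp (I * kc k (posIdx d j)) + exp (I * kc k (negIdx (posIdx d j))) =
      2 * cos (k j) := fun j => by
    rw [kc_negIdx, kc_posIdx, two_cos]
    push_cast
    ring_nf
  rw [sum_Idx, Finset.sum_congr rfl fun j _ => hpair j, Dhat, ← Finset.mul_sum]
  push_cast
  field_simp

theorem matA_mulVec_smul_one_sub_matD_mulVec_one (k : Fin d → ℝ) (hd : d ≠ 0) {lam : ℂ}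
    (hlam : lam ^ 2 = 2 * d * (Dhat k : ℂ) * lam - (2 * d - 1)) :
    matA k *ᵥ (lam • (fun _ => (1 : ℂ)) - matD k *ᵥ fun _ => (1 : ℂ)) =
      lam • (lam • (fun _ => (1 : ℂ)) - matD k *ᵥ fun _ => (1 : ℂ)) := by
  have hinv : ∀ κ, exp (I * kc (-k) κ) * exp (I * kc k κ) = 1 := fun κ => by
    rw [← exp_add, kc_neg]
    push_cast
    ring_nf
    exact exp_zero
  have hsum : ∑ κ, exp (I * kc (-k) κ) * (lam - exp (I * kc k κ)) =
      lam * (2 * d * Dhat k) - 2 * d := by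
    simp only [mul_sub, hinv, Finset.sum_sub_distrib, ← Finset.sum_mul, sum_exp_kc (-k) hd,
      Dhat_neg, Finset.sum_const, Finset.card_univ, Fintype.card_coe, card_Idx]
    ring
  ext ι
  simp only [matA_mulVec, matD_mulVec, Pi.sub_apply, Pi.smul_apply, smul_eq_mul, mul_one, hsum]
  have hinv_neg := hinv (negIdx ι)
  simp only [kc_neg, kc_negIdx, neg_neg] at hinv_neg ⊢
  linear_combination hinv_neg - hlam

theorem eq_zero_of_exp_mul_I_eq_exp_neg_mul_I {x : ℝ} (hx : x ∈ Set.Ioo (-Real.pi) Real.pi)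
    (h : exp (x * I) = exp (-x * I)) : x = 0 := by
  have harg := congrArg arg h
  rw [exp_mul_I, exp_mul_I, ← ofReal_neg, arg_cos_add_sin_mul_I ⟨hx.1, hx.2.le⟩,
    arg_cos_add_sin_mul_I ⟨by linarith [hx.2], by linarith [hx.1]⟩] at harg
  linarith

theorem smul_one_sub_matD_mulVec_one_ne_zero {k : Fin d → ℝ}
    (hk : ∀ j, k j ∈ Set.Ioo (-Real.pi) Real.pi) (hk0 : k ≠ 0) (lam : ℂ) :
    lam • (fun _ => (1 : ℂ)) - matD k *ᵥ (fun _ => (1 : ℂ)) ≠ 0 := by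
  intro hv
  obtain ⟨j, hj⟩ := Function.ne_iff.mp hk0
  have hpos := congrFun hv (posIdx d j)
  have hneg := congrFun hv (negIdx (posIdx d j))
  simp only [matD_mulVec, kc_negIdx, kc_posIdx, Pi.sub_apply, Pi.smul_apply, smul_eq_mul,
    mul_one, Pi.zero_apply, sub_eq_zero] at hpos hneg
  refine hj (eq_zero_of_exp_mul_I_eq_exp_neg_mul_I (hk j) ?_)
  rw [mul_comm, ← hpos, hneg]
  push_cast
  ring_nf

theorem matA_zero_mulVec_one :
    matA (0 : Fin d → ℝ) *ᵥ (fun _ => (1 : ℂ)) = (2 * (d : ℂ) - 1) • fun _ => (1 : ℂ) := by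
  ext ι
  simp [matA_zero, sub_mulVec, matC_mulVec, matJ_mulVec, card_Idx]

theorem matA_zero_mulVec_of_apply_negIdx {w : Idx d → ℂ} (hw : ∀ ι, w (negIdx ι) = -w ι) :
    matA (0 : Fin d → ℝ) *ᵥ w = w := by
  have hsum : ∑ κ, w κ = 0 := by
    have := Equiv.sum_comp negIdx_involutive.toPerm w
    simp only [Function.Involutive.coe_toPerm, hw, Finset.sum_neg_distrib] at this
    linear_combination -this / 2
  ext ι
  rw [matA_zero, sub_mulVec, matC_mulVec, matJ_mulVec]
  simp only [Pi.sub_apply, hsum, hw]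
  ring

theorem eVec_apply_negIdx (ι κ : Idx d) : eVec ι (negIdx κ) = eVec (negIdx ι) κ := by
  simp only [eVec, negIdx_involutive.eq_iff]

theorem eVec_sub_eVec_negIdx_apply_negIdx (ι κ : Idx d) :
    (eVec ι - eVec (negIdx ι)) (negIdx κ) = -(eVec ι - eVec (negIdx ι)) κ := by
  rw [Pi.sub_apply, eVec_apply_negIdx, eVec_apply_negIdx, negIdx_involutive, Pi.sub_apply,
    neg_sub]

end

/-- roots of `λ² = 2d·D̂(k)·λ − (2d−1)` are eigenvalues of `A[k]`
with eigenvectors `λ·1⃗ − D[k]·1⃗` (nonzero when `k ≠ 0`); at `k = 0` the root `2d−1`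
has eigenvector `(2d−2)·1⃗` and the root `1` has eigenvector `e⃗_1 − e⃗_{−1}`. -/
theorem nbw_dominant_eigenvalues (d : ℕ) (hd : 2 ≤ d) (k : Fin d → ℝ)
    (hk : ∀ j, k j ∈ Set.Ioo (-Real.pi) Real.pi) :
    (∀ lam : ℂ, lam ^ 2 = 2 * d * (Dhat k : ℂ) * lam - (2 * d - 1) →
      matA k *ᵥ (lam • (fun _ => (1 : ℂ)) - matD k *ᵥ fun _ => (1 : ℂ)) =
        lam • (lam • (fun _ => (1 : ℂ)) - matD k *ᵥ fun _ => (1 : ℂ))) ∧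
    (k ≠ 0 → ∀ lam : ℂ, lam ^ 2 = 2 * d * (Dhat k : ℂ) * lam - (2 * d - 1) →
      lam • (fun _ => (1 : ℂ)) - matD k *ᵥ (fun _ => (1 : ℂ)) ≠ 0) ∧
    (k = 0 →
      matA k *ᵥ ((2 * (d : ℂ) - 2) • fun _ => (1 : ℂ)) =
        (2 * (d : ℂ) - 1) • ((2 * (d : ℂ) - 2) • fun _ => (1 : ℂ)) ∧
      matA k *ᵥ (eVec ⟨1, mem_Idx' (by omega) (by omega) (by omega)⟩ -
          eVec ⟨-1, mem_Idx' (by omega) (by omega) (by omega)⟩) =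
        eVec ⟨1, mem_Idx' (by omega) (by omega) (by omega)⟩ -
          eVec ⟨-1, mem_Idx' (by omega) (by omega) (by omega)⟩) := by
  refine ⟨fun lam hlam => matA_mulVec_smul_one_sub_matD_mulVec_one k (by omega) hlam,
    fun hk0 lam _ => smul_one_sub_matD_mulVec_one_ne_zero hk hk0 lam, ?_⟩
  rintro rfl
  refine ⟨?_, matA_zero_mulVec_of_apply_negIdx (eVec_sub_eVec_negIdx_apply_negIdx _)⟩
  rw [mulVec_smul, matA_zero_mulVec_one, smul_comm]

end
end

section
/- Fix an integer d ≥ 2 and k ∈ (−π,π)^d such that (d·D̂(k))² = 2d−1, and let λ = d·D̂(k) be the corresponding double root of λ² = 2d·D̂(k)·λ − (2d−1). Then A[k]·1⃗ = (λ·1⃗ − D[k]·1⃗) + λ·1⃗, and consequently for every n ≥ 1: b⃗_n(k) = (n+1)·λ^n·1⃗ − n·λ^{n−1}·D[k]·1⃗, and for every n ≥ 2: b̂_n(k) = 2d·[ n·D̂(k)·λ^{n−1} − (n−1)·λ^{n−2} ]. -/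
/-
Encoding a non-backtracking walk by its sequence of steps `ι₀, …, ι_{n-1} ∈ I` (never
`ι_{i+1} = -ι_i`) turns `b̂_n^ι(k)` into a sum, over such sequences with `ι₀ ≠ ι`, of
`∏ e^{i k_{ι_m}}`. Splitting off the first step gives `b⃗_{n+1}(k) = A[k] b⃗_n(k)` with
`b⃗_0(k) = 1⃗`, and `b̂_{n+1}(k) = Σ_κ e^{i k_κ} b̂_n^{-κ}(k)`. Since `e^{i k_κ} e^{i k_{-κ}} = 1`
and `Σ_κ e^{i k_κ} = 2λ`, `A[k]` maps `1⃗ ↦ 2λ 1⃗ - D[k] 1⃗` and `D[k] 1⃗ ↦ (2d - 1) 1⃗`; when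
`λ² = 2d - 1` this is a Jordan block with eigenvalue `λ`, whose powers produce the coefficients
`(n + 1) λ^n` and `n λ^(n-1)`.
-/

open scoped BigOperators
open Matrix

noncomputable section

namespace NBW

open Complex

variable {d n : ℕ}

lemma negIdx_involutive : Function.Involutive (negIdx (d := d)) := fun ι => by
  simp [negIdx]

lemma kc_negIdx (k : Fin d → ℝ) (ι : Idx d) : kc k (negIdx ι) = -kc k ι := by
  simp only [kc, negIdx, Int.sign_neg, Int.natAbs_neg, Int.cast_neg, neg_mul]

lemma kc_neg (k : Fin d → ℝ) (ι : Idx d) : kc (-k) ι = -kc k ι := by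
  simp [kc]

lemma exp_kc_mul_exp_kc_negIdx (k : Fin d → ℝ) (ι : Idx d) :
    cexp (I * kc k ι) * cexp (I * kc k (negIdx ι)) = 1 := by
  rw [kc_negIdx, ← Complex.exp_add]
  push_cast
  ring_nf
  exact Complex.exp_zero

def signedIdx : Fin d ⊕ Fin d → Idx d
  | .inl j => ⟨j + 1, mem_Idx' (by omega) (by omega) (by omega)⟩
  | .inr j => ⟨-(j + 1), mem_Idx' (by omega) (by omega) (by omega)⟩

lemma signedIdx_bijective : Function.Bijective (signedIdx (d := d)) := by
  constructor
  · rintro (i | i) (j | j) h <;> simp [signedIdx, Fin.ext_iff] at h ⊢ <;> omega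
  · rintro ⟨ι, hι⟩
    obtain ⟨h0, hlo, hhi⟩ := mem_Idx hι
    rcases lt_or_gt_of_ne h0 with h | h
    · exact ⟨.inr ⟨(-ι - 1).toNat, by omega⟩, Subtype.ext (by simp [signedIdx]; omega)⟩
    · exact ⟨.inl ⟨(ι - 1).toNat, by omega⟩, Subtype.ext (by simp [signedIdx]; omega)⟩

lemma kc_signedIdx_inl (k : Fin d → ℝ) (j : Fin d) : kc k (signedIdx (.inl j)) = k j := by
  simp only [kc, signedIdx]
  rw [Int.sign_eq_one_of_pos (by omega), Int.cast_one, one_mul]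
  congr 1

lemma kc_signedIdx_inr (k : Fin d → ℝ) (j : Fin d) : kc k (signedIdx (.inr j)) = -k j := by
  simp only [kc, signedIdx]
  rw [Int.sign_eq_neg_one_of_neg (by omega), Int.cast_neg, Int.cast_one, neg_one_mul]
  congr 2

lemma card_Idx : Fintype.card (Idx d) = 2 * d := by
  rw [← Fintype.card_of_bijective signedIdx_bijective, Fintype.card_sum, Fintype.card_fin, two_mul]

lemma natCast_mul_Dhat (k : Fin d → ℝ) : (d : ℝ) * Dhat k = ∑ j, Real.cos (k j) := by
  rcases Nat.eq_zero_or_pos d with rfl | hd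
  · simp
  · rw [Dhat, ← mul_assoc, mul_one_div_cancel (by positivity), one_mul]

lemma sum_exp_kc (k : Fin d → ℝ) : ∑ ι, cexp (I * kc k ι) = 2 * ((d * Dhat k : ℝ) : ℂ) := by
  rw [← signedIdx_bijective.sum_comp, Fintype.sum_sum_type, natCast_mul_Dhat,
    ← Finset.sum_add_distrib]
  simp only [kc_signedIdx_inl, kc_signedIdx_inr, Complex.ofReal_sum, Finset.mul_sum]
  refine Finset.sum_congr rfl fun j _ => ?_
  rw [Complex.ofReal_cos, Complex.cos]
  push_cast
  ring_nf

def coordIdx (ι : Idx d) : Fin d :=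
  ⟨ι.1.natAbs - 1, by obtain ⟨h1, h2, h3⟩ := mem_Idx ι.2; omega⟩

lemma natAbs_eq_coordIdx_add_one (ι : Idx d) : ι.1.natAbs = coordIdx ι + 1 := by
  obtain ⟨h0, -, -⟩ := mem_Idx ι.2
  simp only [coordIdx]
  omega

lemma stepVec_eq_single (ι : Idx d) : stepVec ι = Pi.single (coordIdx ι) ι.1.sign := by
  ext j
  simp [stepVec, coordIdx, Pi.single_apply, Fin.ext_iff]

lemma sum_abs_stepVec (ι : Idx d) : ∑ j, |stepVec ι j| = 1 := by
  obtain ⟨h0, -, -⟩ := mem_Idx ι.2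
  simp [stepVec_eq_single, Pi.single_apply, apply_ite (|·|), Int.abs_sign_of_ne_zero h0]

lemma sum_mul_stepVec (k : Fin d → ℝ) (ι : Idx d) :
    ∑ j, (k j : ℂ) * (stepVec ι j : ℂ) = kc k ι := by
  simp [stepVec_eq_single, Pi.single_apply, kc, coordIdx, mul_comm]

lemma stepVec_negIdx (ι : Idx d) : stepVec (negIdx ι) = -stepVec ι := by
  ext j
  simp [stepVec, negIdx]
  split_ifs <;> simp

lemma stepVec_injective : Function.Injective (stepVec (d := d)) := by
  intro ι κ h
  obtain ⟨hι, -, -⟩ := mem_Idx ι.2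
  have hc := congrFun h (coordIdx ι)
  simp only [stepVec_eq_single, Pi.single_eq_same, Pi.single_apply] at hc
  split_ifs at hc with hcoord
  · apply Subtype.ext
    rw [← Int.sign_mul_natAbs ι.1, ← Int.sign_mul_natAbs κ.1, hc, natAbs_eq_coordIdx_add_one,
      natAbs_eq_coordIdx_add_one, hcoord]
  · exact absurd (Int.sign_eq_zero_iff_zero.1 hc) hι

lemma exists_eq_single_of_sum_abs_eq_one {y : Fin d → ℤ} (hy : ∑ j, |y j| = 1) :
    ∃ c, (y c = 1 ∨ y c = -1) ∧ y = Pi.single c (y c) := by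
  obtain ⟨c, hc⟩ : ∃ c, y c ≠ 0 := by
    by_contra! h
    simp [h] at hy
  have hsplit := Finset.add_sum_erase Finset.univ (fun j => |y j|) (Finset.mem_univ c)
  have hrest := Finset.sum_nonneg fun j (_ : j ∈ Finset.univ.erase c) => abs_nonneg (y j)
  have hyc : |y c| = 1 := by have := Int.one_le_abs hc; omega
  refine ⟨c, abs_eq zero_le_one |>.1 hyc, funext fun j => ?_⟩
  by_cases hj : j = c
  · simp [hj]
  · rw [Pi.single_eq_of_ne hj]
    exact abs_eq_zero.1 <| (Finset.sum_eq_zero_iff_of_nonneg fun j _ => abs_nonneg (y j)).1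
      (by omega) j (Finset.mem_erase.2 ⟨hj, Finset.mem_univ j⟩)

lemma exists_stepVec_eq {y : Fin d → ℤ} (hy : ∑ j, |y j| = 1) : ∃ ι : Idx d, stepVec ι = y := by
  obtain ⟨c, hsign, hyc⟩ := exists_eq_single_of_sum_abs_eq_one hy
  -- the step `e_ι` with `ι = ±(c + 1)`
  have hmem : y c * (c + 1) ∈ Idx d := by
    rcases hsign with h | h <;> exact mem_Idx' (by simp [h]; omega) (by simp [h] <;> omega)
      (by simp [h] <;> omega)
  refine ⟨⟨_, hmem⟩, (?_ : _ = Pi.single c (y c)).trans hyc.symm⟩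
  rw [stepVec_eq_single]
  congr 1
  · ext
    rcases hsign with h | h <;> simp [coordIdx, h] <;> omega
  · rcases hsign with h | h <;> simp [h]; omega

def NonBack (s : Fin n → Idx d) : Prop :=
  ∀ i : ℕ, ∀ h : i + 1 < n, s ⟨i + 1, h⟩ ≠ negIdx (s ⟨i, by omega⟩)

def walkOf (s : Fin n → Idx d) : Fin (n + 1) → Fin d → ℤ :=
  Fin.partialSum (stepVec ∘ s)

lemma walkOf_succ (s : Fin n → Idx d) (i : ℕ) (h : i < n) :
    walkOf s ⟨i + 1, by omega⟩ = walkOf s ⟨i, by omega⟩ + stepVec (s ⟨i, h⟩) :=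
  Fin.partialSum_succ _ ⟨i, h⟩

lemma walkOf_last (s : Fin n → Idx d) : walkOf s (Fin.last n) = ∑ i, stepVec (s i) := by
  simp [walkOf, Fin.partialSum, List.take_of_length_le, List.sum_ofFn]

lemma walkOf_injective : Function.Injective (walkOf (d := d) (n := n)) := by
  intro s t h
  funext i
  apply stepVec_injective
  have hi := congrFun h ⟨i + 1, by omega⟩
  rw [walkOf_succ s i i.2, walkOf_succ t i i.2, h] at hi
  exact add_left_cancel hi

lemma walkOf_add_two_eq_iff (s : Fin n → Idx d) (i : ℕ) (h : i + 2 ≤ n) :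
    walkOf s ⟨i + 2, by omega⟩ = walkOf s ⟨i, by omega⟩ ↔
      s ⟨i + 1, by omega⟩ = negIdx (s ⟨i, by omega⟩) := by
  rw [← stepVec_injective.eq_iff, stepVec_negIdx, eq_neg_iff_add_eq_zero,
    walkOf_succ s (i + 1) h, walkOf_succ s i (by omega), add_assoc, add_eq_left, add_comm]

lemma isNBW_walkOf {s : Fin n → Idx d} (hs : NonBack s) : IsNBW d n (walkOf s) := by
  refine ⟨Fin.partialSum_zero _, fun i hi => ?_, fun i hi => ?_⟩
  · simpa [walkOf_succ s i hi] using sum_abs_stepVec (s ⟨i, hi⟩)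
  · exact fun heq => hs i (by omega) ((walkOf_add_two_eq_iff s i hi).1 heq)

lemma exists_walkOf_eq {ω : Fin (n + 1) → Fin d → ℤ} (hω : IsNBW d n ω) :
    ∃ s, NonBack s ∧ walkOf s = ω := by
  obtain ⟨h0, hstep, hback⟩ := hω
  choose s hs using fun i : Fin n => exists_stepVec_eq (hstep i i.2)
  have hwalk : walkOf s = ω := by
    conv_rhs => rw [← Fin.partialSum_left_neg ω, h0, zero_vadd]
    unfold walkOf
    congr 1
    funext i
    rw [Function.comp_apply, hs i, neg_add_eq_sub]
    rfl
  refine ⟨s, fun i hi hback' => hback i hi ?_, hwalk⟩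
  rw [← hwalk]
  exact (walkOf_add_two_eq_iff s i hi).2 hback'

lemma card_isNBW_and (P : (Fin (n + 1) → Fin d → ℤ) → Prop) :
    Nat.card {ω // IsNBW d n ω ∧ P ω} =
      Nat.card {s : Fin n → Idx d // NonBack s ∧ P (walkOf s)} := by
  refine (Nat.card_congr (Equiv.ofBijective
    (fun s => ⟨walkOf s.1, isNBW_walkOf s.2.1, s.2.2⟩) ⟨fun s t h => ?_, ?_⟩)).symm
  · exact Subtype.ext (walkOf_injective (congrArg Subtype.val h))
  · rintro ⟨ω, hω, hP⟩
    obtain ⟨s, hs, rfl⟩ := exists_walkOf_eq hω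
    exact ⟨⟨s, hs, hP⟩, rfl⟩

open scoped Classical

def FirstStepNe (ι : Idx d) (s : Fin n → Idx d) : Prop :=
  ∀ h : 0 < n, s ⟨0, h⟩ ≠ ι

def pathWeight (k : Fin d → ℝ) (s : Fin n → Idx d) : ℂ :=
  ∏ i, cexp (I * kc k (s i))

lemma fhat_card_fiber {E : Type*} [Fintype E] (p : E → Prop) [DecidablePred p] (g : E → Fin d → ℤ)
    (k : Fin d → ℝ) :
    fhat (fun x => Nat.card {e // p e ∧ g e = x}) k =
      ∑ e with p e, cexp (I * ∑ j, (k j : ℂ) * (g e j : ℂ)) := by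
  rw [fhat, tsum_eq_sum (s := (Finset.univ.filter p).image g), Finset.sum_comp
    (fun x : Fin d → ℤ => cexp (I * ∑ j, (k j : ℂ) * (x j : ℂ))) g]
  · refine Finset.sum_congr rfl fun x _ => ?_
    rw [nsmul_eq_mul, Nat.card_eq_fintype_card, Fintype.card_subtype, Finset.filter_filter]
  · intro x hx
    have : IsEmpty {e // p e ∧ g e = x} :=
      ⟨fun ⟨e, he, hex⟩ => hx (Finset.mem_image.2 ⟨e, by simpa using he, hex⟩)⟩
    simp

lemma exp_walkOf_last (k : Fin d → ℝ) (s : Fin n → Idx d) :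
    cexp (I * ∑ j, (k j : ℂ) * (walkOf s (Fin.last n) j : ℂ)) = pathWeight k s := by
  have hdot : ∑ j, (k j : ℂ) * (walkOf s (Fin.last n) j : ℂ) = ∑ i, (kc k (s i) : ℂ) := by
    simp only [walkOf_last, Finset.sum_apply, Int.cast_sum, Finset.mul_sum]
    rw [Finset.sum_comm]
    simp only [sum_mul_stepVec]
  rw [hdot, Finset.mul_sum, Complex.exp_sum, pathWeight]

lemma forall_walkOf_one_ne_iff (s : Fin n → Idx d) (ι : Idx d) :
    (∀ h : 1 ≤ n, walkOf s ⟨1, by omega⟩ ≠ stepVec ι) ↔ FirstStepNe ι s := by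
  refine forall_congr' fun h => ?_
  rw [walkOf_succ s 0 h, show (⟨0, by omega⟩ : Fin (n + 1)) = 0 from rfl, walkOf,
    Fin.partialSum_zero, zero_add, Ne, stepVec_injective.eq_iff]

lemma bvec_eq_sum (n : ℕ) (k : Fin d → ℝ) (ι : Idx d) :
    bvec d n k ι = ∑ s : Fin n → Idx d with NonBack s ∧ FirstStepNe ι s, pathWeight k s := by
  have hcard : bcRes d n ι = fun x =>
      Nat.card {s // (NonBack s ∧ FirstStepNe ι s) ∧ walkOf s (Fin.last n) = x} := by
    funext x
    rw [bcRes, card_isNBW_and]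
    exact Nat.card_congr <| Equiv.subtypeEquivRight fun s => by
      rw [forall_walkOf_one_ne_iff]
      tauto
  rw [bvec, hcard, fhat_card_fiber]
  exact Finset.sum_congr rfl fun s _ => exp_walkOf_last k s

lemma bhat_eq_sum (n : ℕ) (k : Fin d → ℝ) :
    bhat d n k = ∑ s : Fin n → Idx d with NonBack s, pathWeight k s := by
  rw [bhat, show bc d n = fun x => Nat.card {s // NonBack s ∧ walkOf s (Fin.last n) = x} from
    funext fun x => card_isNBW_and _, fhat_card_fiber]
  exact Finset.sum_congr rfl fun s _ => exp_walkOf_last k s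

lemma nonBack_cons (κ : Idx d) (t : Fin n → Idx d) :
    NonBack (Fin.cons κ t : Fin (n + 1) → Idx d) ↔ FirstStepNe (negIdx κ) t ∧ NonBack t := by
  constructor
  · intro h
    exact ⟨fun hn => h 0 (Nat.succ_lt_succ hn), fun i hi => h (i + 1) (Nat.succ_lt_succ hi)⟩
  · rintro ⟨h0, h⟩ (_ | i) hi
    · exact h0 (Nat.lt_of_succ_lt_succ hi)
    · exact h i (Nat.lt_of_succ_lt_succ hi)

lemma pathWeight_cons (k : Fin d → ℝ) (κ : Idx d) (t : Fin n → Idx d) :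
    pathWeight k (Fin.cons κ t : Fin (n + 1) → Idx d) = cexp (I * kc k κ) * pathWeight k t := by
  simp [pathWeight, Fin.prod_univ_succ]

lemma sum_nonBack_succ (k : Fin d → ℝ) (Q : Idx d → Prop) [DecidablePred Q] :
    ∑ s : Fin (n + 1) → Idx d with NonBack s ∧ Q (s 0), pathWeight k s =
      ∑ κ with Q κ, cexp (I * kc k κ) *
        ∑ t : Fin n → Idx d with NonBack t ∧ FirstStepNe (negIdx κ) t, pathWeight k t := by
  rw [Finset.sum_filter, ← Equiv.sum_comp (Fin.consEquiv fun _ => Idx d), Fintype.sum_prod_type,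
    Finset.sum_filter]
  refine Finset.sum_congr rfl fun κ _ => ?_
  split_ifs with hQ
  · rw [Finset.sum_filter, Finset.mul_sum]
    refine Finset.sum_congr rfl fun t _ => ?_
    simp [Fin.consEquiv, nonBack_cons, pathWeight_cons, hQ, and_comm]
  · simp [Fin.consEquiv, hQ]

lemma matD_mulVec_one_apply (k : Fin d → ℝ) (ι : Idx d) :
    (matD k *ᵥ fun _ => (1 : ℂ)) ι = cexp (I * kc k ι) := by
  rw [matD, mulVec_diagonal, mul_one]

lemma matA_mulVec_apply (k : Fin d → ℝ) (v : Idx d → ℂ) (ι : Idx d) :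
    (matA k *ᵥ v) ι = ∑ κ with κ ≠ ι, cexp (I * kc k κ) * v (negIdx κ) := by
  rw [Finset.sum_filter, mulVec, dotProduct, ← Equiv.sum_comp (negIdx_involutive.toPerm _)]
  refine Finset.sum_congr rfl fun κ _ => ?_
  have hJ : (ι : ℤ) = -(negIdx κ : ℤ) ↔ κ = ι := by
    rw [Subtype.ext_iff]
    simp only [negIdx, neg_neg, eq_comm]
  simp only [Function.Involutive.coe_toPerm, matA, matD, mul_diagonal, Matrix.sub_apply, matC, matJ,
    of_apply, kc_neg, kc_negIdx, neg_neg, hJ]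
  by_cases h : κ = ι <;> simp [h]

lemma sum_exp_mul_sub (k : Fin d → ℝ) (a c : ℂ) :
    ∑ κ, cexp (I * kc k κ) * (a - c * cexp (I * kc k (negIdx κ))) =
      2 * ((d * Dhat k : ℝ) : ℂ) * a - 2 * d * c := by
  have hpair (κ : Idx d) : cexp (I * kc k κ) * (a - c * cexp (I * kc k (negIdx κ))) =
      a * cexp (I * kc k κ) - c := by
    linear_combination (-c) * exp_kc_mul_exp_kc_negIdx k κ
  simp only [hpair, Finset.sum_sub_distrib, ← Finset.mul_sum, sum_exp_kc, Finset.sum_const,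
    Finset.card_univ, card_Idx, nsmul_eq_mul]
  push_cast
  ring

lemma matA_mulVec_smul_one_sub_smul_matD (k : Fin d → ℝ) (a c : ℂ) :
    matA k *ᵥ (a • (fun _ => (1 : ℂ)) - c • (matD k *ᵥ fun _ => (1 : ℂ))) =
      (2 * ((d * Dhat k : ℝ) : ℂ) * a - (2 * d - 1) * c) • (fun _ => (1 : ℂ)) -
        a • (matD k *ᵥ fun _ => (1 : ℂ)) := by
  funext ι
  rw [matA_mulVec_apply, Finset.filter_ne', Finset.sum_erase_eq_sub (Finset.mem_univ ι)]
  simp only [Pi.sub_apply, Pi.smul_apply, smul_eq_mul, matD_mulVec_one_apply, mul_one]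
  rw [sum_exp_mul_sub]
  linear_combination c * exp_kc_mul_exp_kc_negIdx k ι

lemma bvec_zero (k : Fin d → ℝ) : bvec d 0 k = fun _ => 1 := by
  funext ι
  simp [bvec_eq_sum, NonBack, FirstStepNe, pathWeight]

lemma bvec_succ (n : ℕ) (k : Fin d → ℝ) : bvec d (n + 1) k = matA k *ᵥ bvec d n k := by
  funext ι
  have hfirst (s : Fin (n + 1) → Idx d) : FirstStepNe ι s ↔ s 0 ≠ ι :=
    ⟨fun h => h n.succ_pos, fun h _ => h⟩
  simp only [bvec_eq_sum, hfirst, matA_mulVec_apply]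
  exact sum_nonBack_succ k (· ≠ ι)

lemma bhat_succ (n : ℕ) (k : Fin d → ℝ) :
    bhat d (n + 1) k = ∑ κ, cexp (I * kc k κ) * bvec d n k (negIdx κ) := by
  simpa [bhat_eq_sum, bvec_eq_sum] using sum_nonBack_succ (n := n) k fun _ => True

lemma bvec_eq_of_sq_eq (k : Fin d → ℝ) (hdisc : ((d : ℝ) * Dhat k) ^ 2 = 2 * d - 1) (n : ℕ) :
    bvec d n k = (((n : ℂ) + 1) * ((d * Dhat k : ℝ) : ℂ) ^ n) • (fun _ => (1 : ℂ)) -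
      ((n : ℂ) * ((d * Dhat k : ℝ) : ℂ) ^ (n - 1)) • (matD k *ᵥ fun _ => (1 : ℂ)) := by
  have hL : ((d * Dhat k : ℝ) : ℂ) ^ 2 = 2 * d - 1 := by exact_mod_cast hdisc
  induction n with
  | zero => simp [bvec_zero]
  | succ n ih =>
    have hpow : (n : ℂ) * ((d * Dhat k : ℝ) : ℂ) ^ (n - 1) * ((d * Dhat k : ℝ) : ℂ) ^ 2 =
        n * ((d * Dhat k : ℝ) : ℂ) ^ (n + 1) := by
      rcases n with _ | n
      · simp
      · rw [Nat.add_sub_cancel, mul_assoc, ← pow_add]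
    rw [bvec_succ, ih, matA_mulVec_smul_one_sub_smul_matD, Nat.add_sub_cancel, Nat.cast_add_one]
    congr 2
    linear_combination (-1 : ℂ) * hpow + (n : ℂ) * ((d * Dhat k : ℝ) : ℂ) ^ (n - 1) * hL

lemma bhat_succ_eq_of_sq_eq (k : Fin d → ℝ) (hdisc : ((d : ℝ) * Dhat k) ^ 2 = 2 * d - 1) (n : ℕ) :
    bhat d (n + 1) k =
      2 * ((n : ℂ) + 1) * ((d * Dhat k : ℝ) : ℂ) ^ (n + 1) -
        2 * d * n * ((d * Dhat k : ℝ) : ℂ) ^ (n - 1) := by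
  have hcombo := sum_exp_mul_sub k (((n : ℂ) + 1) * ((d * Dhat k : ℝ) : ℂ) ^ n)
    ((n : ℂ) * ((d * Dhat k : ℝ) : ℂ) ^ (n - 1))
  rw [bhat_succ, bvec_eq_of_sq_eq k hdisc]
  simp only [Pi.sub_apply, Pi.smul_apply, smul_eq_mul, matD_mulVec_one_apply, mul_one, hcombo]
  ring

end NBW

theorem nbw_double_root_general (d : ℕ) (k : Fin d → ℝ)
    (hdisc : ((d : ℝ) * Dhat k) ^ 2 = 2 * d - 1) :
    matA k *ᵥ (fun _ => (1 : ℂ)) =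
      ((((d : ℝ) * Dhat k : ℝ) : ℂ) • (fun _ => (1 : ℂ)) - matD k *ᵥ fun _ => (1 : ℂ)) +
        (((d : ℝ) * Dhat k : ℝ) : ℂ) • (fun _ => (1 : ℂ)) ∧
    (∀ n : ℕ, 1 ≤ n →
      bvec d n k =
        (((n : ℂ) + 1) * (((d : ℝ) * Dhat k : ℝ) : ℂ) ^ n) • (fun _ => (1 : ℂ)) -
          ((n : ℂ) * (((d : ℝ) * Dhat k : ℝ) : ℂ) ^ (n - 1)) •
            (matD k *ᵥ fun _ => (1 : ℂ))) ∧
    (∀ n : ℕ, 2 ≤ n →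
      bhat d n k =
        2 * d * ((n : ℂ) * (Dhat k : ℂ) * (((d : ℝ) * Dhat k : ℝ) : ℂ) ^ (n - 1) -
          ((n : ℂ) - 1) * (((d : ℝ) * Dhat k : ℝ) : ℂ) ^ (n - 2))) := by
  refine ⟨?_, fun n _ => NBW.bvec_eq_of_sq_eq k hdisc n, fun n hn => ?_⟩
  · have h := NBW.matA_mulVec_smul_one_sub_smul_matD k 1 0
    rw [one_smul, zero_smul, sub_zero] at h
    rw [h]
    ext
    simp only [Pi.add_apply, Pi.sub_apply, Pi.smul_apply, smul_eq_mul]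
    ring
  · obtain ⟨m, rfl⟩ : ∃ m, n = m + 1 := ⟨n - 1, by omega⟩
    rw [NBW.bhat_succ_eq_of_sq_eq k hdisc, Nat.add_sub_cancel, show m + 1 - 2 = m - 1 by omega]
    push_cast
    ring

/-- the degenerate case `(d·D̂(k))² = 2d−1`, with double root `λ = d·D̂(k)`:
`A[k]·1⃗ = (λ·1⃗ − D[k]·1⃗) + λ·1⃗`, and the resulting formulas for `b⃗_n(k)` and `b̂_n(k)`. -/
theorem nbw_double_root (d : ℕ) (hd : 2 ≤ d) (k : Fin d → ℝ)
    (hk : ∀ j, k j ∈ Set.Ioo (-Real.pi) Real.pi)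
    (hdisc : ((d : ℝ) * Dhat k) ^ 2 = 2 * d - 1) :
    matA k *ᵥ (fun _ => (1 : ℂ)) =
      ((((d : ℝ) * Dhat k : ℝ) : ℂ) • (fun _ => (1 : ℂ)) - matD k *ᵥ fun _ => (1 : ℂ)) +
        (((d : ℝ) * Dhat k : ℝ) : ℂ) • (fun _ => (1 : ℂ)) ∧
    (∀ n : ℕ, 1 ≤ n →
      bvec d n k =
        (((n : ℂ) + 1) * (((d : ℝ) * Dhat k : ℝ) : ℂ) ^ n) • (fun _ => (1 : ℂ)) -
          ((n : ℂ) * (((d : ℝ) * Dhat k : ℝ) : ℂ) ^ (n - 1)) •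
            (matD k *ᵥ fun _ => (1 : ℂ))) ∧
    (∀ n : ℕ, 2 ≤ n →
      bhat d n k =
        2 * d * ((n : ℂ) * (Dhat k : ℂ) * (((d : ℝ) * Dhat k : ℝ) : ℂ) ^ (n - 1) -
          ((n : ℂ) - 1) * (((d : ℝ) * Dhat k : ℝ) : ℂ) ^ (n - 2))) :=
  nbw_double_root_general d k hdisc

end
end
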